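/- arXiv:2302.05231 — 8 statements merged into one kernel-verified Lean document; each statement's English description precedes it below -/
import Mathlib

section
/- For every positive integer v with v ≡ 1 (mod 16), there exists a pair of orthogonal 8-cycle systems of order v, i.e., two partitions of the edge set of the complete graph K_v into 8-cycles such that any cycle from the first partition and any cycle from the second partition share at most one edge. -/
/-- A set of edges `C` forms a cycle of length `l`: there is a graph and a closed walk
which is a cycle, has length `l`, and whose edge set is exactly `C`. -/
def IsCycleEdgeSet {V : Type*} (l : ℕ) (C : Set (Sym2 V)) : Prop :=
  ∃ (G : SimpleGraph V) (x : V) (w : G.Walk x x),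
    w.IsCycle ∧ w.length = l ∧ C = {e | e ∈ w.edges}

/-- `D` is a decomposition of the edge set of `G` into cycles of length `l`:
each member of `D` is the edge set of an `l`-cycle contained in `G`, and every
edge of `G` lies in exactly one member of `D`. -/
def IsCycleDecomposition {V : Type*} (G : SimpleGraph V) (l : ℕ)
    (D : Set (Set (Sym2 V))) : Prop :=
  (∀ C ∈ D, IsCycleEdgeSet l C ∧ C ⊆ G.edgeSet) ∧
  (∀ e ∈ G.edgeSet, ∃! C, C ∈ D ∧ e ∈ C)

/-- Two cycle decompositions are orthogonal if any member of the first and any member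
of the second share at most one edge. -/
def OrthogonalDecompositions {V : Type*} (D₁ D₂ : Set (Set (Sym2 V))) : Prop :=
  ∀ C₁ ∈ D₁, ∀ C₂ ∈ D₂, (C₁ ∩ C₂).Subsingleton

namespace OCS

/-- The edge set of the closed 8-cycle through `f 0, f 1, …, f 7`. -/
def cyc {V : Type*} (f : Fin 8 → V) : Set (Sym2 V) :=
  {e | ∃ j : Fin 8, e = s(f j, f (j + 1))}

lemma cyc_spec {V : Type*} (f : Fin 8 → V) (hf : Function.Injective f) :
    IsCycleEdgeSet 8 (cyc f) ∧ cyc f ⊆ (⊤ : SimpleGraph V).edgeSet := by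
  have hne : ∀ {j j' : Fin 8}, j ≠ j' → (⊤ : SimpleGraph V).Adj (f j) (f j') := by
    intro j j' h
    simp only [SimpleGraph.top_adj]
    exact fun hc => h (hf hc)
  let w : (⊤ : SimpleGraph V).Walk (f 0) (f 0) :=
    .cons (hne (show (0:Fin 8) ≠ 1 by decide))
      (.cons (hne (show (1:Fin 8) ≠ 2 by decide))
      (.cons (hne (show (2:Fin 8) ≠ 3 by decide))
      (.cons (hne (show (3:Fin 8) ≠ 4 by decide))
      (.cons (hne (show (4:Fin 8) ≠ 5 by decide))
      (.cons (hne (show (5:Fin 8) ≠ 6 by decide))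
      (.cons (hne (show (6:Fin 8) ≠ 7 by decide))
      (.cons (hne (show (7:Fin 8) ≠ 0 by decide)) .nil)))))))
  have hedges : w.edges = [s(f 0, f 1), s(f 1, f 2), s(f 2, f 3), s(f 3, f 4),
      s(f 4, f 5), s(f 5, f 6), s(f 6, f 7), s(f 7, f 0)] := rfl
  have hsupp : w.support = [f 0, f 1, f 2, f 3, f 4, f 5, f 6, f 7, f 0] := rfl
  constructor
  · refine ⟨⊤, f 0, w, ?_, rfl, ?_⟩
    · rw [SimpleGraph.Walk.isCycle_def]
      refine ⟨?_, by simp [w], ?_⟩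
      · rw [SimpleGraph.Walk.isTrail_def, hedges]
        simp [List.nodup_cons, Sym2.eq_iff, hf.eq_iff]
      · rw [hsupp]
        simp [List.nodup_cons, hf.eq_iff]
    · rw [hedges]
      ext e
      simp only [cyc, Set.mem_setOf_eq, List.mem_cons, List.not_mem_nil, or_false]
      constructor
      · rintro ⟨j, rfl⟩
        fin_cases j <;> simp
      · rintro (rfl | rfl | rfl | rfl | rfl | rfl | rfl | rfl)
        exacts [⟨0, rfl⟩, ⟨1, rfl⟩, ⟨2, rfl⟩, ⟨3, rfl⟩, ⟨4, rfl⟩, ⟨5, rfl⟩, ⟨6, rfl⟩, ⟨7, rfl⟩]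
  · rintro e ⟨j, rfl⟩
    rw [SimpleGraph.mem_edgeSet]
    exact hne (by revert j; decide)

/-- The family of translates of the base cycles. -/
def DD (v t : ℕ) (W : ℕ → Fin 8 → ℕ) : Set (Set (Sym2 (ZMod v))) :=
  {C | ∃ i, i < t ∧ ∃ s : ZMod v, C = cyc (fun j => ((W (8*i) j : ℕ) : ZMod v) + s)}

lemma castinj {v : ℕ} [NeZero v] {a b : ℕ} (ha : a < v) (hb : b < v)
    (h : (a : ZMod v) = b) : a = b := by
  have h1 := ZMod.val_cast_of_lt ha
  have h2 := ZMod.val_cast_of_lt hb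
  rw [h] at h1; omega

lemma key {v t : ℕ} [NeZero v] (hv : v = 16*t+1) {u₁ u₂ : ZMod v} {d₁ d₂ : ℕ}
    (h₁ : 1 ≤ d₁) (h₂ : d₁ ≤ 8*t) (h₃ : 1 ≤ d₂) (h₄ : d₂ ≤ 8*t)
    (h : s(u₁, u₁ + (d₁ : ZMod v)) = s(u₂, u₂ + (d₂ : ZMod v))) :
    u₁ = u₂ ∧ d₁ = d₂ := by
  rw [Sym2.eq_iff] at h
  rcases h with ⟨h5, h6⟩ | ⟨h5, h6⟩
  · subst h5
    have h7 : (d₁ : ZMod v) = d₂ := by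
      have := h6
      exact add_left_cancel this
    exact ⟨rfl, castinj (by omega) (by omega) h7⟩
  · exfalso
    rw [h5] at h6
    have h7 : u₂ + ((d₂ + d₁ : ℕ) : ZMod v) = u₂ + 0 := by
      push_cast
      rw [add_zero, ← add_assoc]
      exact h6
    have h8 : ((d₂ + d₁ : ℕ) : ZMod v) = 0 := add_left_cancel h7
    have h9 : v ∣ d₂ + d₁ := (ZMod.natCast_eq_zero_iff _ _).mp h8
    have h10 : v ≤ d₂ + d₁ := Nat.le_of_dvd (by omega) h9
    omega

lemma edge_form {v : ℕ} (W : ℕ → Fin 8 → ℕ) (K A : Fin 8 → ℕ)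
    (hA : ∀ m j, (W m j = A j ∧ W m (j+1) = A j + (m + K j)) ∨
                 (W m (j+1) = A j ∧ W m j = A j + (m + K j)))
    (m : ℕ) (s : ZMod v) (j : Fin 8) :
    s(((W m j : ℕ) : ZMod v) + s, ((W m (j+1) : ℕ) : ZMod v) + s)
      = s(((A j : ℕ) : ZMod v) + s, ((A j : ℕ) : ZMod v) + s + ((m + K j : ℕ) : ZMod v)) := by
  rcases hA m j with ⟨h1, h2⟩ | ⟨h1, h2⟩ <;> rw [h1, h2, Sym2.eq_iff]
  · left
    constructor
    · rfl
    · push_cast; ring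
  · right
    constructor
    · push_cast; ring
    · rfl

lemma decomp (v t : ℕ) (hv : v = 16*t+1)
    (W : ℕ → Fin 8 → ℕ) (K A : Fin 8 → ℕ)
    (hW16 : ∀ m j, W m j ≤ m + 16)
    (hWinj : ∀ i, i < t → Function.Injective (W (8*i)))
    (hK : ∀ j, 1 ≤ K j ∧ K j ≤ 8)
    (hKinj : Function.Injective K)
    (hKsurj : ∀ k, 1 ≤ k → k ≤ 8 → ∃ j, K j = k)
    (hA : ∀ m j, (W m j = A j ∧ W m (j+1) = A j + (m + K j)) ∨
                 (W m (j+1) = A j ∧ W m j = A j + (m + K j))) :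
    IsCycleDecomposition (⊤ : SimpleGraph (ZMod v)) 8 (DD v t W) := by
  haveI : NeZero v := ⟨by omega⟩
  constructor
  · rintro C ⟨i, hi, s, rfl⟩
    have hf : Function.Injective (fun j => ((W (8*i) j : ℕ) : ZMod v) + s) := by
      intro j j' h
      simp only at h
      have h2 : ((W (8*i) j : ℕ) : ZMod v) = ((W (8*i) j' : ℕ) : ZMod v) :=
        add_right_cancel h
      exact hWinj i hi (castinj (by have := hW16 (8*i) j; omega)
        (by have := hW16 (8*i) j'; omega) h2)
    exact cyc_spec _ hf
  · intro e he
    induction e using Sym2.ind with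
    | _ x y =>
    rw [SimpleGraph.mem_edgeSet, SimpleGraph.top_adj] at he
    -- canonical form of the edge
    obtain ⟨x', d, hd1, hd8, hexy⟩ :
        ∃ (x' : ZMod v) (d : ℕ), 1 ≤ d ∧ d ≤ 8*t ∧ s(x, y) = s(x', x' + (d : ZMod v)) := by
      set δ := y - x with hδdef
      have hδ : δ ≠ 0 := sub_ne_zero.mpr (Ne.symm he)
      have hv1 : 1 ≤ δ.val := by
        have := (ZMod.val_eq_zero δ).not.mpr hδ
        omega
      have hv2 : δ.val ≤ 16*t := by
        have := ZMod.val_lt δ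
        omega
      have hy : y = x + ((δ.val : ℕ) : ZMod v) := by
        rw [ZMod.natCast_rightInverse δ, hδdef]; ring
      by_cases hc : δ.val ≤ 8*t
      · exact ⟨x, δ.val, hv1, hc, by rw [← hy]⟩
      · refine ⟨y, v - δ.val, by omega, by omega, ?_⟩
        have hx : x = y + ((v - δ.val : ℕ) : ZMod v) := by
          rw [Nat.cast_sub (by omega), ZMod.natCast_self, ZMod.natCast_rightInverse δ, hδdef]
          ring
        rw [← hx, Sym2.eq_iff]
        right; exact ⟨rfl, rfl⟩
    obtain ⟨j, hj⟩ := hKsurj (d - 8*((d-1)/8)) (by omega) (by omega)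
    set i := (d-1)/8 with hidef
    have hit : i < t := by omega
    have hmk : 8*i + K j = d := by omega
    set s : ZMod v := x' - ((A j : ℕ) : ZMod v) with hsdef
    have hAs : ((A j : ℕ) : ZMod v) + s = x' := by rw [hsdef]; ring
    refine ⟨cyc (fun j' => ((W (8*i) j' : ℕ) : ZMod v) + s), ⟨⟨i, hit, s, rfl⟩, ?_⟩, ?_⟩
    · refine ⟨j, ?_⟩
      rw [edge_form W K A hA, hAs, hmk, ← hexy]
    · rintro C' ⟨⟨i', hi', s', rfl⟩, he'⟩
      obtain ⟨j', hj'⟩ := he'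
      rw [edge_form W K A hA, hexy] at hj'
      have hkey := key hv hd1 hd8 (by have := hK j'; omega)
        (by have := hK j'; omega) hj'
      obtain ⟨hu, hd⟩ := hkey
      have hii : i' = i ∧ K j' = K j := by
        have h1 := hK j; have h2 := hK j'
        omega
      have hjj : j' = j := hKinj hii.2
      have hss : s' = s := by
        rw [hsdef, hu, hjj]
        ring
      rw [hii.1, hss]

lemma orth (v t : ℕ) (hv : v = 16*t+1)
    (W₁ W₂ : ℕ → Fin 8 → ℕ) (K₁ K₂ A₁ A₂ : Fin 8 → ℕ)
    (hK₁ : ∀ j, 1 ≤ K₁ j ∧ K₁ j ≤ 8) (hK₂ : ∀ j, 1 ≤ K₂ j ∧ K₂ j ≤ 8)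
    (hA₁ : ∀ m j, (W₁ m j = A₁ j ∧ W₁ m (j+1) = A₁ j + (m + K₁ j)) ∨
                 (W₁ m (j+1) = A₁ j ∧ W₁ m j = A₁ j + (m + K₁ j)))
    (hA₂ : ∀ m j, (W₂ m j = A₂ j ∧ W₂ m (j+1) = A₂ j + (m + K₂ j)) ∨
                 (W₂ m (j+1) = A₂ j ∧ W₂ m j = A₂ j + (m + K₂ j)))
    (hA₁b : ∀ j, A₁ j ≤ 3) (hA₂b : ∀ j, A₂ j ≤ 6)
    (hO : ∀ j₁ j₂ j₁' j₂' : Fin 8, K₁ j₁ = K₂ j₂ → K₁ j₁' = K₂ j₂' →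
        A₁ j₁ + A₂ j₂' = A₁ j₁' + A₂ j₂ → j₁ = j₁' ∧ j₂ = j₂') :
    OrthogonalDecompositions (DD v t W₁) (DD v t W₂) := by
  haveI : NeZero v := ⟨by omega⟩
  rintro C₁ ⟨i, hi, s, rfl⟩ C₂ ⟨i', hi', s', rfl⟩ e he e' he'
  have hv17 : 17 ≤ v := by omega
  obtain ⟨⟨j₁, hej1⟩, ⟨j₂, hej2⟩⟩ := he
  obtain ⟨⟨j₁', hej1'⟩, ⟨j₂', hej2'⟩⟩ := he'
  rw [edge_form W₁ K₁ A₁ hA₁] at hej1 hej1'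
  rw [edge_form W₂ K₂ A₂ hA₂] at hej2 hej2'
  -- compare the two representations of e
  have hk1 := key hv (d₁ := 8*i + K₁ j₁) (d₂ := 8*i' + K₂ j₂)
    (by have := hK₁ j₁; omega) (by have := hK₁ j₁; omega)
    (by have := hK₂ j₂; omega) (by have := hK₂ j₂; omega) (by rw [← hej1, ← hej2])
  have hk2 := key hv (d₁ := 8*i + K₁ j₁') (d₂ := 8*i' + K₂ j₂')
    (by have := hK₁ j₁'; omega) (by have := hK₁ j₁'; omega)
    (by have := hK₂ j₂'; omega) (by have := hK₂ j₂'; omega) (by rw [← hej1', ← hej2'])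
  obtain ⟨hu1, hd1⟩ := hk1
  obtain ⟨hu2, hd2⟩ := hk2
  have hKK1 : K₁ j₁ = K₂ j₂ := by
    have h1 := hK₁ j₁; have h2 := hK₂ j₂; omega
  have hKK2 : K₁ j₁' = K₂ j₂' := by
    have h1 := hK₁ j₁'; have h2 := hK₂ j₂'; omega
  -- combine the anchor equations
  have hsum : ((A₁ j₁ + A₂ j₂' : ℕ) : ZMod v) + (s + s')
      = ((A₁ j₁' + A₂ j₂ : ℕ) : ZMod v) + (s + s') := by
    have h3 : (((A₁ j₁ : ℕ) : ZMod v) + s) + (((A₂ j₂' : ℕ) : ZMod v) + s')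
        = (((A₂ j₂ : ℕ) : ZMod v) + s') + (((A₁ j₁' : ℕ) : ZMod v) + s) := by
      rw [hu1, ← hu2]
    push_cast at h3 ⊢
    linear_combination h3
  have hsum2 : A₁ j₁ + A₂ j₂' = A₁ j₁' + A₂ j₂ := by
    have h4 := add_right_cancel hsum
    exact castinj (by have := hA₁b j₁; have := hA₂b j₂'; omega)
      (by have := hA₁b j₁'; have := hA₂b j₂; omega) h4
  obtain ⟨hj11, hj22⟩ := hO j₁ j₂ j₁' j₂' hKK1 hKK2 hsum2
  rw [hej1, hej1', hj11]

/-! The two concrete base-cycle shapes. -/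

def W1 (m : ℕ) : Fin 8 → ℕ
  | 0 => 0 | 1 => m+5 | 2 => 1 | 3 => m+9 | 4 => 2 | 5 => m+4 | 6 => 3 | 7 => m+6
def K1 : Fin 8 → ℕ
  | 0 => 5 | 1 => 4 | 2 => 8 | 3 => 7 | 4 => 2 | 5 => 1 | 6 => 3 | 7 => 6
def A1 : Fin 8 → ℕ
  | 0 => 0 | 1 => 1 | 2 => 1 | 3 => 2 | 4 => 2 | 5 => 3 | 6 => 3 | 7 => 0

def W2 (m : ℕ) : Fin 8 → ℕ
  | 0 => 0 | 1 => m+3 | 2 => 1 | 3 => m+9 | 4 => 5 | 5 => m+11 | 6 => 6 | 7 => m+7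
def K2 : Fin 8 → ℕ
  | 0 => 3 | 1 => 2 | 2 => 8 | 3 => 4 | 4 => 6 | 5 => 5 | 6 => 1 | 7 => 7
def A2 : Fin 8 → ℕ
  | 0 => 0 | 1 => 1 | 2 => 1 | 3 => 5 | 4 => 5 | 5 => 6 | 6 => 6 | 7 => 0

lemma master (v t : ℕ) (hv : v = 16*t+1) :
    ∃ D₁ D₂ : Set (Set (Sym2 (ZMod v))),
      IsCycleDecomposition (⊤ : SimpleGraph (ZMod v)) 8 D₁ ∧
      IsCycleDecomposition (⊤ : SimpleGraph (ZMod v)) 8 D₂ ∧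
      OrthogonalDecompositions D₁ D₂ := by
  refine ⟨DD v t W1, DD v t W2, ?_, ?_, ?_⟩
  · refine decomp v t hv W1 K1 A1 ?_ ?_ ?_ ?_ ?_ ?_
    · intro m j; fin_cases j <;> simp [W1] <;> omega
    · intro i _ j j' h
      fin_cases j <;> fin_cases j' <;> simp_all [W1] <;> omega
    · intro j; fin_cases j <;> simp [K1]
    · intro j j' h; fin_cases j <;> fin_cases j' <;> simp_all [K1]
    · intro k h1 h2
      interval_cases k
      exacts [⟨5, rfl⟩, ⟨4, rfl⟩, ⟨6, rfl⟩, ⟨1, rfl⟩, ⟨0, rfl⟩, ⟨7, rfl⟩, ⟨3, rfl⟩, ⟨2, rfl⟩]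
    · intro m j; fin_cases j <;> simp [W1, K1, A1] <;> omega
  · refine decomp v t hv W2 K2 A2 ?_ ?_ ?_ ?_ ?_ ?_
    · intro m j; fin_cases j <;> simp [W2] <;> omega
    · intro i _ j j' h
      fin_cases j <;> fin_cases j' <;> simp_all [W2] <;> omega
    · intro j; fin_cases j <;> simp [K2]
    · intro j j' h; fin_cases j <;> fin_cases j' <;> simp_all [K2]
    · intro k h1 h2
      interval_cases k
      exacts [⟨6, rfl⟩, ⟨1, rfl⟩, ⟨0, rfl⟩, ⟨3, rfl⟩, ⟨5, rfl⟩, ⟨4, rfl⟩, ⟨7, rfl⟩, ⟨2, rfl⟩]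
    · intro m j; fin_cases j <;> simp [W2, K2, A2] <;> omega
  · refine orth v t hv W1 W2 K1 K2 A1 A2 ?_ ?_ ?_ ?_ ?_ ?_ ?_
    · intro j; fin_cases j <;> simp [K1]
    · intro j; fin_cases j <;> simp [K2]
    · intro m j; fin_cases j <;> simp [W1, K1, A1] <;> omega
    · intro m j; fin_cases j <;> simp [W2, K2, A2] <;> omega
    · intro j; fin_cases j <;> simp [A1]
    · intro j; fin_cases j <;> simp [A2]
    · decide

end OCS

theorem orthogonal_eight_cycle_systems (v : ℕ) (hv : 0 < v) (h : v % 16 = 1) :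
    ∃ D₁ D₂ : Set (Set (Sym2 (Fin v))),
      IsCycleDecomposition (⊤ : SimpleGraph (Fin v)) 8 D₁ ∧
      IsCycleDecomposition (⊤ : SimpleGraph (Fin v)) 8 D₂ ∧
      OrthogonalDecompositions D₁ D₂ := by
  obtain ⟨n, rfl⟩ : ∃ n, v = n + 1 := ⟨v - 1, by omega⟩
  exact OCS.master (n + 1) ((n + 1) / 16) (by omega)
end

section
/- There does not exist a pair of orthogonal 7-cycle systems of order 7: no two partitions of the edge set of the complete graph K_7 into cycles of length 7 can have the property that every cycle of the first partition shares at most one edge with every cycle of the second partition. -/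
/-! A 7-cycle system of `K₇` consists of `21 / 7 = 3` cycles. If two such systems were
orthogonal, the 7 edges of one cycle of the first system would lie in 7 pairwise distinct
cycles of the second. -/

open Set

theorem IsCycleEdgeSet.ncard_eq {V : Type*} {l : ℕ} {C : Set (Sym2 V)}
    (h : IsCycleEdgeSet l C) : C.ncard = l := by
  classical
  obtain ⟨G, x, w, hw, rfl, rfl⟩ := h
  rw [← w.length_edges, ← List.toFinset_card_of_nodup hw.edges_nodup, ← ncard_coe_finset]
  simp

namespace IsCycleDecomposition

variable {V : Type*} {G : SimpleGraph V} {l : ℕ} {D : Set (Set (Sym2 V))}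

theorem pairwiseDisjoint (hD : IsCycleDecomposition G l D) : D.PairwiseDisjoint id := by
  refine fun C hC C' hC' hne ↦ disjoint_left.mpr fun e he he' ↦ hne ?_
  exact (hD.2 e ((hD.1 C hC).2 he)).unique ⟨hC, he⟩ ⟨hC', he'⟩

theorem biUnion_eq_edgeSet (hD : IsCycleDecomposition G l D) : ⋃ C ∈ D, C = G.edgeSet := by
  refine subset_antisymm (iUnion₂_subset fun C hC ↦ (hD.1 C hC).2) fun e he ↦ ?_
  obtain ⟨C, ⟨hC, heC⟩, -⟩ := hD.2 e he
  exact mem_biUnion hC heC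

theorem ncard_mul_eq [Finite V] (hD : IsCycleDecomposition G l D) :
    D.ncard * l = G.edgeSet.ncard := by
  have hsum := (toFinite D).ncard_biUnion (fun _ _ ↦ toFinite _) hD.pairwiseDisjoint
  simp only [id] at hsum
  rw [← hD.biUnion_eq_edgeSet, hsum, finsum_mem_congr rfl fun C hC ↦ (hD.1 C hC).1.ncard_eq,
    finsum_mem_eq_finite_toFinset_sum _ (toFinite D), Finset.sum_const, smul_eq_mul,
    ncard_eq_toFinset_card D]

theorem le_ncard_of_orthogonal [Finite V] {l' : ℕ} {D₁ D₂ : Set (Set (Sym2 V))}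
    (h₁ : IsCycleDecomposition G l D₁) (h₂ : IsCycleDecomposition G l' D₂)
    (horth : OrthogonalDecompositions D₁ D₂) {C : Set (Sym2 V)} (hC : C ∈ D₁) :
    l ≤ D₂.ncard := by
  -- orthogonality forces the members of `D₂` through the edges of `C` to be pairwise distinct
  choose! f hf using fun e (he : e ∈ C) ↦ (h₂.2 e ((h₁.1 C hC).2 he)).exists
  rw [← (h₁.1 C hC).1.ncard_eq]
  refine ncard_le_ncard_of_injOn f (fun e he ↦ (hf e he).1) ?_ (toFinite _)
  intro e he e' he' hee'
  exact horth C hC (f e) (hf e he).1 ⟨he, (hf e he).2⟩ ⟨he', hee' ▸ (hf e' he').2⟩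

end IsCycleDecomposition

theorem no_orthogonal_seven_cycle_systems_order_seven :
    ¬ ∃ D₁ D₂ : Set (Set (Sym2 (Fin 7))),
      IsCycleDecomposition (⊤ : SimpleGraph (Fin 7)) 7 D₁ ∧
      IsCycleDecomposition (⊤ : SimpleGraph (Fin 7)) 7 D₂ ∧
      OrthogonalDecompositions D₁ D₂ := by
  rintro ⟨D₁, D₂, h₁, h₂, horth⟩
  obtain ⟨C, ⟨hC, -⟩, -⟩ := h₁.2 s(0, 1) (by simp)
  have hlower : 7 ≤ D₂.ncard := h₁.le_ncard_of_orthogonal h₂ horth hC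
  have hcount : D₂.ncard * 7 = 21 := by
    rw [h₂.ncard_mul_eq, ← SimpleGraph.coe_edgeFinset, ncard_coe_finset,
      SimpleGraph.card_edgeFinset_top_eq_card_choose_two]
    rfl
  omega
end

section
/- There does not exist a pair of orthogonal 9-cycle systems of order 9: no two partitions of the edge set of the complete graph K_9 into cycles of length 9 can have the property that every cycle of the first partition shares at most one edge with every cycle of the second partition. -/
theorem no_orthogonal_nine_cycle_systems_order_nine :
    ¬ ∃ D₁ D₂ : Set (Set (Sym2 (Fin 9))),
      IsCycleDecomposition (⊤ : SimpleGraph (Fin 9)) 9 D₁ ∧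
      IsCycleDecomposition (⊤ : SimpleGraph (Fin 9)) 9 D₂ ∧
      OrthogonalDecompositions D₁ D₂ := by
  classical
  rintro ⟨D₁, D₂, h₁, h₂, horth⟩
  -- The edge set of K₉ has 36 edges.
  have h36 : (⊤ : SimpleGraph (Fin 9)).edgeFinset.card = 36 := by
    rw [SimpleGraph.card_edgeFinset_top_eq_card_choose_two]; decide
  -- Each 9-cycle edge set has 9 edges.
  have hcyc : ∀ (C : Set (Sym2 (Fin 9))), IsCycleEdgeSet 9 C → C.ncard = 9 := by
    rintro C ⟨G, x, w, hc, hl, rfl⟩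
    have hn := hc.edges_nodup
    have he : {e | e ∈ w.edges} = (w.edges.toFinset : Set (Sym2 (Fin 9))) := by ext e; simp
    rw [he, Set.ncard_coe_finset, List.toFinset_card_of_nodup hn,
      SimpleGraph.Walk.length_edges, hl]
  -- Each decomposition has exactly 4 cycles.
  have hfour : ∀ D : Set (Set (Sym2 (Fin 9))),
      IsCycleDecomposition (⊤ : SimpleGraph (Fin 9)) 9 D → D.toFinset.card = 4 := by
    intro D hD
    have hunion : (⊤ : SimpleGraph (Fin 9)).edgeFinset
        = D.toFinset.biUnion (fun C => C.toFinset) := by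
      ext e
      simp only [Finset.mem_biUnion, Set.mem_toFinset, SimpleGraph.mem_edgeFinset]
      constructor
      · intro he
        obtain ⟨C, hC, -⟩ := hD.2 e he
        exact ⟨C, hC.1, hC.2⟩
      · rintro ⟨C, hC, heC⟩
        exact (hD.1 C hC).2 heC
    have hdisj : ∀ C₁ ∈ D.toFinset, ∀ C₂ ∈ D.toFinset, C₁ ≠ C₂ →
        Disjoint (C₁.toFinset : Finset (Sym2 (Fin 9))) C₂.toFinset := by
      intro C₁ hC₁ C₂ hC₂ hne
      rw [Set.mem_toFinset] at hC₁ hC₂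
      rw [Finset.disjoint_left]
      intro e he₁ he₂
      rw [Set.mem_toFinset] at he₁ he₂
      have heE : e ∈ (⊤ : SimpleGraph (Fin 9)).edgeSet := (hD.1 C₁ hC₁).2 he₁
      obtain ⟨C, -, huniq⟩ := hD.2 e heE
      exact hne ((huniq C₁ ⟨hC₁, he₁⟩).trans (huniq C₂ ⟨hC₂, he₂⟩).symm)
    have hsum : 36 = ∑ C ∈ D.toFinset, C.toFinset.card := by
      rw [← h36, hunion, Finset.card_biUnion hdisj]
    have hconst : ∀ C ∈ D.toFinset, C.toFinset.card = 9 := by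
      intro C hC
      rw [Set.mem_toFinset] at hC
      rw [← Set.ncard_eq_toFinset_card']
      exact hcyc C (hD.1 C hC).1
    rw [Finset.sum_congr rfl hconst, Finset.sum_const, smul_eq_mul] at hsum
    omega
  -- The map sending each edge to the pair of cycles containing it.
  set f : Sym2 (Fin 9) → Set (Sym2 (Fin 9)) × Set (Sym2 (Fin 9)) := fun e =>
    if h : e ∈ (⊤ : SimpleGraph (Fin 9)).edgeSet then
      ((h₁.2 e h).choose, (h₂.2 e h).choose) else (∅, ∅) with hf
  have hfspec : ∀ e ∈ (⊤ : SimpleGraph (Fin 9)).edgeSet,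
      ((f e).1 ∈ D₁ ∧ e ∈ (f e).1) ∧ ((f e).2 ∈ D₂ ∧ e ∈ (f e).2) := by
    intro e he
    simp only [hf, dif_pos he]
    exact ⟨(h₁.2 e he).choose_spec.1, (h₂.2 e he).choose_spec.1⟩
  have hmaps : ∀ e ∈ (⊤ : SimpleGraph (Fin 9)).edgeFinset,
      f e ∈ D₁.toFinset ×ˢ D₂.toFinset := by
    intro e he
    rw [SimpleGraph.mem_edgeFinset] at he
    obtain ⟨⟨hm₁, -⟩, hm₂, -⟩ := hfspec e he
    simp [Finset.mem_product, hm₁, hm₂]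
  have hinj : ∀ e₁ ∈ (⊤ : SimpleGraph (Fin 9)).edgeFinset,
      ∀ e₂ ∈ (⊤ : SimpleGraph (Fin 9)).edgeFinset, f e₁ = f e₂ → e₁ = e₂ := by
    intro e₁ he₁ e₂ he₂ heq
    rw [SimpleGraph.mem_edgeFinset] at he₁ he₂
    obtain ⟨⟨hm₁, hin₁⟩, hm₂, hin₂⟩ := hfspec e₁ he₁
    obtain ⟨⟨-, hin₁'⟩, -, hin₂'⟩ := hfspec e₂ he₂
    rw [← heq] at hin₁' hin₂'
    exact horth _ hm₁ _ hm₂ ⟨hin₁, hin₂⟩ ⟨hin₁', hin₂'⟩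
  have := Finset.card_le_card_of_injOn f hmaps hinj
  rw [h36, Finset.card_product, hfour D₁ h₁, hfour D₂ h₂] at this
  omega
end

section
/- There exists a pair of orthogonal 5-cycle systems of order 15: two partitions of the edge set of the complete graph K_15 into cycles of length 5 such that any cycle of the first partition and any cycle of the second partition share at most one edge. -/
open SimpleGraph

variable {V : Type*}

def cycleEdges : List V → List (Sym2 V)
  | [] => []
  | a :: t => List.zipWith (s(·, ·)) (a :: t ++ [a]) (t ++ [a])

def cycleEdgeSets (L : List (List V)) : Set (Set (Sym2 V)) :=
  {C | ∃ c ∈ L, {e | e ∈ cycleEdges c} = C}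

theorem exists_isCycle_edges_eq_cycleEdges {a b : V} {s : List V}
    (hnd : (a :: b :: s).Nodup) (hs : s ≠ []) :
    ∃ w : (⊤ : SimpleGraph V).Walk a a,
      w.IsCycle ∧ w.length = s.length + 2 ∧ w.edges = cycleEdges (a :: b :: s) := by
  have hpath_nodup : (b :: s ++ [a]).Nodup := by
    rw [List.nodup_cons, List.nodup_append] at *
    grind
  have hchain : (b :: (s ++ [a])).IsChain (⊤ : SimpleGraph V).Adj :=
    (List.nodup_iff_pairwise_ne.mp hpath_nodup).isChain.imp fun _ _ => (top_adj _ _).mpr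
  obtain ⟨p, hp⟩ : ∃ p : (⊤ : SimpleGraph V).Walk b a, p.support = b :: s ++ [a] :=
    ⟨(Walk.ofSupport _ (List.cons_ne_nil _ _) hchain).copy rfl (by simp),
      (Walk.support_copy _ _ _).trans (Walk.support_ofSupport _ _)⟩
  have hab : (⊤ : SimpleGraph V).Adj a b := by
    rw [top_adj]
    rintro rfl
    simp at hnd
  have hlen : p.length = s.length + 1 := by
    have := p.length_support
    simp_all
  refine ⟨.cons hab p, ?_, by simp [hlen], ?_⟩
  · rw [Walk.isCycle_iff_isPath_tail_and_le_length, Walk.tail_cons]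
    refine ⟨(Walk.isPath_copy _ _ _).mpr (Walk.IsPath.mk' (hp ▸ hpath_nodup)), ?_⟩
    have := List.length_pos_of_ne_nil hs
    simp only [Walk.length_cons, hlen]
    omega
  · rw [Walk.edges_cons, Walk.edges_eq_zipWith_support, hp]
    rfl

theorem cycleEdges_isCycleEdgeSet_and_subset {c : List V} (hc : c.Nodup) (hlen : 3 ≤ c.length) :
    IsCycleEdgeSet c.length {e | e ∈ cycleEdges c} ∧
      {e | e ∈ cycleEdges c} ⊆ (⊤ : SimpleGraph V).edgeSet := by
  obtain _ | ⟨a, _ | ⟨b, s⟩⟩ := c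
  · simp at hlen
  · simp at hlen
  obtain ⟨w, hcycle, hwlen, hedges⟩ :=
    exists_isCycle_edges_eq_cycleEdges hc (by rintro rfl; simp at hlen)
  exact ⟨⟨⊤, a, w, hcycle, hwlen, by rw [hedges]⟩, fun e he => w.edges_subset_edgeSet (hedges ▸ he)⟩

theorem isCycleDecomposition_cycleEdgeSets {l : ℕ} {L : List (List V)} (hl : 3 ≤ l)
    (hshape : ∀ c ∈ L, c.length = l ∧ c.Nodup)
    (hcover : ∀ a b : V, a ≠ b → ∃ c ∈ L, s(a, b) ∈ cycleEdges c)
    (hdisj : (L.flatMap cycleEdges).Nodup) :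
    IsCycleDecomposition ⊤ l (cycleEdgeSets L) := by
  refine ⟨?_, fun e he => ?_⟩
  · rintro C ⟨c, hc, rfl⟩
    obtain ⟨rfl, hnd⟩ := hshape c hc
    exact cycleEdges_isCycleEdgeSet_and_subset hnd hl
  induction e using Sym2.ind with | _ a b =>
  obtain ⟨c, hc, hab⟩ := hcover a b he
  refine ⟨_, ⟨⟨c, hc, rfl⟩, hab⟩, ?_⟩
  rintro _ ⟨⟨c', hc', rfl⟩, hab'⟩
  by_contra hne
  have : Std.Symm (Function.onFun List.Disjoint (cycleEdges (V := V))) := ⟨fun _ _ h => h.symm⟩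
  exact (List.nodup_flatMap.mp hdisj).2.forall hc' hc (by rintro rfl; exact hne rfl) hab' hab

theorem subsingleton_setOf_mem_of_length_le_one {α : Type*} {l : List α} (h : l.length ≤ 1) :
    {x | x ∈ l}.Subsingleton := by
  match l, h with
  | [], _ => simp
  | [_], _ => simp

theorem orthogonalDecompositions_cycleEdgeSets [DecidableEq V] {L₁ L₂ : List (List V)}
    (h : ∀ c₁ ∈ L₁, ∀ c₂ ∈ L₂, (cycleEdges c₁ ∩ cycleEdges c₂).length ≤ 1) :
    OrthogonalDecompositions (cycleEdgeSets L₁) (cycleEdgeSets L₂) := by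
  rintro _ ⟨c₁, hc₁, rfl⟩ _ ⟨c₂, hc₂, rfl⟩
  have hinter : {e | e ∈ cycleEdges c₁} ∩ {e | e ∈ cycleEdges c₂} =
      {e | e ∈ cycleEdges c₁ ∩ cycleEdges c₂} := by
    ext
    simp [List.mem_inter_iff]
  exact hinter ▸ subsingleton_setOf_mem_of_length_le_one (h c₁ hc₁ c₂ hc₂)

def cycles₁ : List (List (Fin 15)) := [[0, 1, 4, 6, 8], [0, 6, 5, 7, 2], [0, 10, 12, 11, 3], [0, 4, 7, 10, 13], [0, 12, 4, 8, 5], [0, 7, 3, 4, 14], [0, 9, 6, 10, 11], [1, 2, 13, 8, 7], [1, 12, 2, 9, 3], [1, 5, 10, 14, 13], [1, 6, 11, 13, 9], [1, 11, 4, 10, 8], [1, 14, 5, 3, 10], [2, 3, 8, 11, 5], [2, 4, 9, 7, 11], [2, 6, 3, 12, 8], [2, 14, 8, 9, 10], [3, 14, 6, 7, 13], [4, 13, 6, 12, 5], [5, 13, 12, 14, 9], [7, 12, 9, 11, 14]]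

def cycles₂ : List (List (Fin 15)) := [[0, 1, 14, 2, 7], [0, 2, 13, 9, 14], [0, 3, 13, 5, 11], [0, 4, 2, 5, 8], [0, 13, 1, 7, 5], [0, 10, 11, 7, 6], [0, 9, 11, 6, 12], [1, 2, 9, 5, 10], [1, 6, 9, 12, 3], [1, 12, 5, 14, 4], [1, 5, 6, 4, 8], [1, 11, 8, 7, 9], [2, 3, 10, 13, 8], [2, 10, 7, 13, 6], [2, 12, 4, 3, 11], [3, 14, 11, 4, 5], [3, 9, 8, 10, 6], [3, 8, 6, 14, 7], [4, 10, 14, 12, 7], [4, 13, 12, 10, 9], [8, 14, 13, 11, 12]]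

theorem orthogonal_five_cycle_systems_order_fifteen :
    ∃ D₁ D₂ : Set (Set (Sym2 (Fin 15))),
      IsCycleDecomposition (⊤ : SimpleGraph (Fin 15)) 5 D₁ ∧
      IsCycleDecomposition (⊤ : SimpleGraph (Fin 15)) 5 D₂ ∧
      OrthogonalDecompositions D₁ D₂ :=
  ⟨cycleEdgeSets cycles₁, cycleEdgeSets cycles₂,
    isCycleDecomposition_cycleEdgeSets (by norm_num) (by decide +kernel) (by decide +kernel)
      (by decide +kernel),
    isCycleDecomposition_cycleEdgeSets (by norm_num) (by decide +kernel) (by decide +kernel)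
      (by decide +kernel),
    orthogonalDecompositions_cycleEdgeSets (by decide +kernel)⟩
end

section
/- There exists a pair of orthogonal 5-cycle decompositions of the graph K_15 \ K_5 (the complete graph on 15 vertices with the edges of a complete graph on a fixed set of 5 vertices removed): two partitions of the edge set of this graph into cycles of length 5 such that any cycle of the first partition and any cycle of the second partition share at most one edge. -/
def edgesOf : List (Fin 15) → List (Sym2 (Fin 15))
  | [a,b,c,d,e] => [s(a,b), s(b,c), s(c,d), s(d,e), s(e,a)]
  | _ => []

def L1 : List (List (Fin 15)) := [[0,5,14,2,9], [0,6,10,8,14], [0,7,14,4,12], [0,8,1,7,10], [0,11,8,2,13], [1,5,7,9,10], [1,6,13,12,11], [1,9,3,6,14], [1,12,2,11,13], [2,5,13,4,7], [2,6,12,5,10], [3,5,8,9,13], [3,7,11,6,8], [3,10,4,5,11], [3,12,7,13,14], [4,6,5,9,11], [4,8,7,6,9], [8,12,14,10,13], [9,12,10,11,14]]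
def L2 : List (List (Fin 15)) := [[0,5,11,6,14], [0,6,8,11,10], [0,7,9,4,11], [0,8,13,1,9], [0,12,2,10,13], [1,5,10,12,8], [1,6,12,3,7], [1,10,14,5,12], [1,11,3,13,14], [2,5,6,9,13], [2,6,7,4,14], [2,7,14,9,11], [2,8,3,5,9], [3,6,13,11,14], [3,9,12,7,10], [4,5,7,11,12], [4,6,10,9,8], [4,10,8,7,13], [5,8,14,12,13]]

def Dof (L : List (List (Fin 15))) : Set (Set (Sym2 (Fin 15))) :=
  (fun c => {e | e ∈ edgesOf c}) '' {c | c ∈ L}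

set_option maxRecDepth 10000 in
set_option maxHeartbeats 4000000 in
theorem key1 : ∀ x y : Fin 15, (L1.countP (fun c => s(x,y) ∈ edgesOf c)) =
    if x ≠ y ∧ ¬((x:ℕ) < 5 ∧ (y:ℕ) < 5) then 1 else 0 := by decide

set_option maxRecDepth 10000 in
set_option maxHeartbeats 4000000 in
theorem key2 : ∀ x y : Fin 15, (L2.countP (fun c => s(x,y) ∈ edgesOf c)) =
    if x ≠ y ∧ ¬((x:ℕ) < 5 ∧ (y:ℕ) < 5) then 1 else 0 := by decide

set_option maxRecDepth 10000 in
set_option maxHeartbeats 4000000 in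
theorem key3 : ∀ c₁ ∈ L1, ∀ c₂ ∈ L2,
    ((edgesOf c₁).filter (fun e => e ∈ edgesOf c₂)).length ≤ 1 := by decide

theorem shape1 : ∀ c ∈ L1, c.length = 5 ∧ c.Nodup := by decide
theorem shape2 : ∀ c ∈ L2, c.length = 5 ∧ c.Nodup := by decide
lemma mk5 (a b c d e : Fin 15) (h : ([a,b,c,d,e] : List (Fin 15)).Nodup) :
    IsCycleEdgeSet 5 {x | x ∈ edgesOf [a,b,c,d,e]} := by
  simp [List.nodup_cons] at h
  obtain ⟨hab, hac, had, hae, hbc, hbd, hbe, hcd, hce, hde⟩ :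
      a ≠ b ∧ a ≠ c ∧ a ≠ d ∧ a ≠ e ∧ b ≠ c ∧ b ≠ d ∧ b ≠ e ∧ c ≠ d ∧ c ≠ e ∧ d ≠ e := by
    tauto
  have p1 : (⊤ : SimpleGraph (Fin 15)).Adj a b := by simp [hab]
  have p2 : (⊤ : SimpleGraph (Fin 15)).Adj b c := by simp [hbc]
  have p3 : (⊤ : SimpleGraph (Fin 15)).Adj c d := by simp [hcd]
  have p4 : (⊤ : SimpleGraph (Fin 15)).Adj d e := by simp [hde]
  have p5 : (⊤ : SimpleGraph (Fin 15)).Adj e a := by simp [Ne.symm hae]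
  refine ⟨⊤, a, .cons p1 (.cons p2 (.cons p3 (.cons p4 (.cons p5 .nil)))), ?_, rfl, rfl⟩
  rw [SimpleGraph.Walk.isCycle_def]
  refine ⟨?_, by simp, ?_⟩
  · rw [SimpleGraph.Walk.isTrail_def]
    simp [Sym2.eq_iff]
    tauto
  · simp [List.nodup_cons]
    tauto

lemma isCycle_of (c : List (Fin 15)) (h5 : c.length = 5) (hnd : c.Nodup) :
    IsCycleEdgeSet 5 {e | e ∈ edgesOf c} := by
  match c with
  | [a,b,cc,d,e] => exact mk5 a b cc d e hnd

lemma eq_of_len_le_one {α : Type*} {l : List α} (h : l.length ≤ 1) {a b : α}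
    (ha : a ∈ l) (hb : b ∈ l) : a = b := by
  match l with
  | [] => cases ha
  | [x] => simp at ha hb; subst ha; subst hb; rfl
  | x :: y :: t => simp at h

abbrev Grel : SimpleGraph (Fin 15) :=
  SimpleGraph.fromRel (fun x y : Fin 15 => ¬((x : ℕ) < 5 ∧ (y : ℕ) < 5))

lemma decomp_of (L : List (List (Fin 15)))
    (hkey : ∀ x y : Fin 15, (L.countP (fun c => s(x,y) ∈ edgesOf c)) =
      if x ≠ y ∧ ¬((x:ℕ) < 5 ∧ (y:ℕ) < 5) then 1 else 0)
    (hshape : ∀ c ∈ L, c.length = 5 ∧ c.Nodup) :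
    IsCycleDecomposition Grel 5 (Dof L) := by
  constructor
  · rintro C ⟨c, hc, rfl⟩
    refine ⟨isCycle_of c (hshape c hc).1 (hshape c hc).2, ?_⟩
    intro e he
    induction e using Sym2.ind with
    | _ x y =>
      have hpos : 0 < L.countP (fun c => s(x,y) ∈ edgesOf c) := by
        rw [List.countP_pos_iff]
        exact ⟨c, hc, by simpa using he⟩
      rw [hkey x y] at hpos
      split_ifs at hpos with hcond
      · rw [SimpleGraph.mem_edgeSet, SimpleGraph.fromRel_adj]
        exact ⟨hcond.1, Or.inl hcond.2⟩
      · simp at hpos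
  · intro e he
    induction e using Sym2.ind with
    | _ x y =>
      rw [SimpleGraph.mem_edgeSet, SimpleGraph.fromRel_adj] at he
      have hcond : x ≠ y ∧ ¬((x:ℕ) < 5 ∧ (y:ℕ) < 5) := by
        refine ⟨he.1, ?_⟩; rcases he.2 with h | h <;> tauto
      have hcount : L.countP (fun c => s(x,y) ∈ edgesOf c) = 1 := by
        rw [hkey x y, if_pos hcond]
      rw [List.countP_eq_length_filter] at hcount
      obtain ⟨a, hfa⟩ := List.length_eq_one_iff.mp hcount
      have haL : a ∈ L ∧ s(x,y) ∈ edgesOf a := by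
        have : a ∈ L.filter (fun c => decide (s(x,y) ∈ edgesOf c)) := by
          rw [hfa]; exact List.mem_singleton_self a
        rw [List.mem_filter] at this
        exact ⟨this.1, by simpa using this.2⟩
      refine ⟨{e | e ∈ edgesOf a}, ⟨⟨a, haL.1, rfl⟩, haL.2⟩, ?_⟩
      rintro C ⟨⟨c, hc, rfl⟩, heC⟩
      have : c ∈ L.filter (fun c => decide (s(x,y) ∈ edgesOf c)) := by
        rw [List.mem_filter]
        exact ⟨hc, by simpa using heC⟩
      rw [hfa] at this
      simp at this
      subst this
      rfl

/-- `K_15` minus `K_5`: the complete graph on 15 vertices with all edges among the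
fixed 5-element vertex set `{0,1,2,3,4}` removed. -/
theorem orthogonal_five_cycle_decompositions_K15_minus_K5 :
    ∃ D₁ D₂ : Set (Set (Sym2 (Fin 15))),
      IsCycleDecomposition (SimpleGraph.fromRel (fun x y : Fin 15 => ¬((x : ℕ) < 5 ∧ (y : ℕ) < 5))) 5 D₁ ∧
      IsCycleDecomposition (SimpleGraph.fromRel (fun x y : Fin 15 => ¬((x : ℕ) < 5 ∧ (y : ℕ) < 5))) 5 D₂ ∧
      OrthogonalDecompositions D₁ D₂ := by
  refine ⟨Dof L1, Dof L2, decomp_of L1 key1 shape1, decomp_of L2 key2 shape2, ?_⟩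
  rintro C₁ ⟨c₁, hc₁, rfl⟩ C₂ ⟨c₂, hc₂, rfl⟩
  intro x hx y hy
  have hlen := key3 c₁ hc₁ c₂ hc₂
  have hx' : x ∈ (edgesOf c₁).filter (fun e => e ∈ edgesOf c₂) := by
    rw [List.mem_filter]; exact ⟨hx.1, by simpa using hx.2⟩
  have hy' : y ∈ (edgesOf c₁).filter (fun e => e ∈ edgesOf c₂) := by
    rw [List.mem_filter]; exact ⟨hy.1, by simpa using hy.2⟩
  exact eq_of_len_le_one hlen hx' hy'
end

section
/- There exists a pair of orthogonal 6-cycle systems of order 9: two partitions of the edge set of the complete graph K_9 into cycles of length 6 such that any cycle of the first partition and any cycle of the second partition share at most one edge. -/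
open SimpleGraph

abbrev G9 : SimpleGraph (Fin 9) := ⊤

def path6 (a b c d e f : Fin 9) (h1 : G9.Adj a b) (h2 : G9.Adj b c) (h3 : G9.Adj c d)
    (h4 : G9.Adj d e) (h5 : G9.Adj e f) (h6 : G9.Adj f a) : G9.Walk a a :=
  .cons h1 (.cons h2 (.cons h3 (.cons h4 (.cons h5 (.cons h6 .nil)))))

def cycL (a b c d e f : Fin 9) : List (Sym2 (Fin 9)) :=
  [s(a,b), s(b,c), s(c,d), s(d,e), s(e,f), s(f,a)]

lemma path6_isCycle (a b c d e f : Fin 9) (h1 : G9.Adj a b) (h2 : G9.Adj b c)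
    (h3 : G9.Adj c d) (h4 : G9.Adj d e) (h5 : G9.Adj e f) (h6 : G9.Adj f a)
    (h : ([a,b,c,d,e,f] : List (Fin 9)).Nodup) :
    (path6 a b c d e f h1 h2 h3 h4 h5 h6).IsCycle := by
  simp only [List.nodup_cons, List.mem_cons, List.not_mem_nil, or_false, List.nodup_nil,
    and_true, not_or] at h
  rw [SimpleGraph.Walk.isCycle_def]
  refine ⟨⟨?_⟩, by simp [path6], ?_⟩
  · simp only [path6, Walk.edges_cons, Walk.edges_nil, List.nodup_cons, List.mem_cons,
      List.not_mem_nil, or_false, List.nodup_nil, and_true, not_or, Sym2.eq_iff, not_and]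
    exact ⟨by tauto, by tauto⟩
  · simp only [path6, Walk.support_cons, Walk.support_nil, List.tail_cons, List.nodup_cons,
      List.mem_cons, List.not_mem_nil, or_false, List.nodup_nil, and_true, not_or]
    tauto

lemma mk6 (a b c d e f : Fin 9) (h : ([a,b,c,d,e,f] : List (Fin 9)).Nodup) :
    IsCycleEdgeSet 6 {x | x ∈ cycL a b c d e f} := by
  simp only [List.nodup_cons, List.mem_cons, List.not_mem_nil, or_false, List.nodup_nil,
    and_true, not_or] at h
  obtain ⟨⟨hab, hac, had, hae, haf⟩, ⟨hbc, hbd, hbe, hbf⟩, ⟨hcd, hce, hcf⟩, ⟨hde, hdf⟩, hef⟩ := h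
  refine ⟨G9, a, path6 a b c d e f ((top_adj _ _).mpr hab) ((top_adj _ _).mpr hbc)
    ((top_adj _ _).mpr hcd) ((top_adj _ _).mpr hde) ((top_adj _ _).mpr hef.1)
    ((top_adj _ _).mpr fun hh => haf hh.symm), ?_, rfl, rfl⟩
  exact path6_isCycle a b c d e f _ _ _ _ _ _ (by
    simp only [List.nodup_cons, List.mem_cons, List.not_mem_nil, or_false, List.nodup_nil,
      and_true, not_or]
    tauto)

def l1 : Fin 6 → List (Sym2 (Fin 9))
  | 0 => cycL 6 3 4 7 1 5
  | 1 => cycL 1 6 2 3 8 4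
  | 2 => cycL 8 6 4 2 5 0
  | 3 => cycL 0 6 7 8 2 1
  | 4 => cycL 1 3 0 7 5 8
  | 5 => cycL 3 7 2 0 4 5

def l2 : Fin 6 → List (Sym2 (Fin 9))
  | 0 => cycL 0 4 6 2 1 7
  | 1 => cycL 2 0 5 6 1 8
  | 2 => cycL 3 6 7 5 4 2
  | 3 => cycL 5 2 7 8 3 1
  | 4 => cycL 6 8 4 7 3 0
  | 5 => cycL 8 5 3 4 1 0

lemma key1' : ∀ a b : Fin 9, a ≠ b → ∃ i : Fin 6, s(a,b) ∈ l1 i := by decide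
lemma key2' : ∀ a b : Fin 9, a ≠ b → ∃ i : Fin 6, s(a,b) ∈ l2 i := by decide

lemma key1_s11 : ∀ x : Sym2 (Fin 9), ¬x.IsDiag → ∃ i : Fin 6, x ∈ l1 i := by
  intro x
  induction x using Sym2.ind with
  | _ a b => intro h; exact key1' a b (by simpa using h)

lemma key2_s11 : ∀ x : Sym2 (Fin 9), ¬x.IsDiag → ∃ i : Fin 6, x ∈ l2 i := by
  intro x
  induction x using Sym2.ind with
  | _ a b => intro h; exact key2' a b (by simpa using h)

lemma uniq1' : ∀ i j : Fin 6, i ≠ j → ∀ x ∈ l1 i, x ∉ l1 j := by decide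
lemma uniq2' : ∀ i j : Fin 6, i ≠ j → ∀ x ∈ l2 i, x ∉ l2 j := by decide

lemma uniq1 : ∀ (x : Sym2 (Fin 9)) (i j : Fin 6), x ∈ l1 i → x ∈ l1 j → i = j := by
  intro x i j h1 h2
  by_contra hne
  exact uniq1' i j hne x h1 h2

lemma uniq2 : ∀ (x : Sym2 (Fin 9)) (i j : Fin 6), x ∈ l2 i → x ∈ l2 j → i = j := by
  intro x i j h1 h2
  by_contra hne
  exact uniq2' i j hne x h1 h2

lemma sub1 : ∀ (i : Fin 6), ∀ x ∈ l1 i, ¬x.IsDiag := by decide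
lemma sub2 : ∀ (i : Fin 6), ∀ x ∈ l2 i, ¬x.IsDiag := by decide
lemma orth : ∀ (i j : Fin 6), ∀ x ∈ l1 i, ∀ y ∈ l1 i,
    x ∈ l2 j → y ∈ l2 j → x = y := by decide

theorem orthogonal_six_cycle_systems_order_nine :
    ∃ D₁ D₂ : Set (Set (Sym2 (Fin 9))),
      IsCycleDecomposition (⊤ : SimpleGraph (Fin 9)) 6 D₁ ∧
      IsCycleDecomposition (⊤ : SimpleGraph (Fin 9)) 6 D₂ ∧
      OrthogonalDecompositions D₁ D₂ := by
  refine ⟨Set.range (fun i => {x | x ∈ l1 i}), Set.range (fun i => {x | x ∈ l2 i}),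
    ⟨?_, ?_⟩, ⟨?_, ?_⟩, ?_⟩
  · rintro C ⟨i, rfl⟩
    refine ⟨?_, fun e he => ?_⟩
    · fin_cases i
      · exact mk6 6 3 4 7 1 5 (by decide)
      · exact mk6 1 6 2 3 8 4 (by decide)
      · exact mk6 8 6 4 2 5 0 (by decide)
      · exact mk6 0 6 7 8 2 1 (by decide)
      · exact mk6 1 3 0 7 5 8 (by decide)
      · exact mk6 3 7 2 0 4 5 (by decide)
    · simp only [edgeSet_top, Set.mem_setOf_eq]
      exact sub1 i e he
  · intro e he
    simp only [edgeSet_top, Set.mem_setOf_eq] at he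
    obtain ⟨i, hi⟩ := key1_s11 e he
    refine ⟨{x | x ∈ l1 i}, ⟨⟨i, rfl⟩, hi⟩, ?_⟩
    rintro C ⟨⟨j, rfl⟩, hj⟩
    have := uniq1 e j i hj hi
    subst this; rfl
  · rintro C ⟨i, rfl⟩
    refine ⟨?_, fun e he => ?_⟩
    · fin_cases i
      · exact mk6 0 4 6 2 1 7 (by decide)
      · exact mk6 2 0 5 6 1 8 (by decide)
      · exact mk6 3 6 7 5 4 2 (by decide)
      · exact mk6 5 2 7 8 3 1 (by decide)
      · exact mk6 6 8 4 7 3 0 (by decide)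
      · exact mk6 8 5 3 4 1 0 (by decide)
    · simp only [edgeSet_top, Set.mem_setOf_eq]
      exact sub2 i e he
  · intro e he
    simp only [edgeSet_top, Set.mem_setOf_eq] at he
    obtain ⟨i, hi⟩ := key2_s11 e he
    refine ⟨{x | x ∈ l2 i}, ⟨⟨i, rfl⟩, hi⟩, ?_⟩
    rintro C ⟨⟨j, rfl⟩, hj⟩
    have := uniq2 e j i hj hi
    subst this; rfl
  · rintro C₁ ⟨i, rfl⟩ C₂ ⟨j, rfl⟩ x ⟨hx1, hx2⟩ y ⟨hy1, hy2⟩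
    exact orth i j x hx1 y hy1 hx2 hy2
end

section
/- There exists a pair of orthogonal 8-cycle decompositions of the complete bipartite graph K_{16,16}: two partitions of the edge set of K_{16,16} into cycles of length 8 such that any cycle of the first partition and any cycle of the second partition share at most one edge. -/
/-!
Identify the edge `{a, 16 + b}` of `K_{16,16}` (`a, b < 16`) with the pair `(a, b)` of residues
mod 16. For a residue `r` mod 4 and `d ∈ {0, 1, 2, 3, 8, 9, 10, 11}`, the edges with `a ≡ r (mod 4)`
and `b - a ∈ {d, d + 4}` form an 8-cycle, and these 32 cycles form the first decomposition. The
second is its image under an explicit permutation of the vertices preserving both parts. Each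
cycle of the first decomposition is a colour class of an edge colouring, so orthogonality amounts
to the 8 edges of every cycle of the second decomposition having distinct colours, which is a
finite check.
-/

open SimpleGraph

section ClosedWalks

variable {V V' ι ι' : Type*} {G : SimpleGraph V} {G' : SimpleGraph V'}

def closedWalkEdgeSets (W : ι → (v : V) × G.Walk v v) : Set (Set (Sym2 V)) :=
  Set.range fun i => {e | e ∈ (W i).2.edges}

/-- The colour classes of `c` on the edges of `G` are the edge sets of the walks `W i`. -/
def IsWalkColouring (W : ι → (v : V) × G.Walk v v) (c : Sym2 V → ι) : Prop :=
  (∀ i, ∀ e ∈ (W i).2.edges, c e = i) ∧ ∀ e ∈ G.edgeSet, e ∈ (W (c e)).2.edges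

theorem IsWalkColouring.isCycleDecomposition {W : ι → (v : V) × G.Walk v v} {c : Sym2 V → ι}
    {l : ℕ} (hc : IsWalkColouring W c) (hW : ∀ i, (W i).2.IsCycle ∧ (W i).2.length = l) :
    IsCycleDecomposition G l (closedWalkEdgeSets W) := by
  refine ⟨?_, fun e he => ⟨_, ⟨⟨c e, rfl⟩, hc.2 e he⟩, ?_⟩⟩
  · rintro _ ⟨i, rfl⟩
    exact ⟨⟨G, _, (W i).2, (hW i).1, (hW i).2, rfl⟩, fun e he => (W i).2.edges_subset_edgeSet he⟩
  · rintro _ ⟨⟨j, rfl⟩, hej⟩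
    rw [hc.1 j e hej]

theorem orthogonalDecompositions_closedWalkEdgeSets {W₁ : ι → (v : V) × G.Walk v v}
    {W₂ : ι' → (v : V) × G.Walk v v} {c : Sym2 V → ι} (hc : ∀ i, ∀ e ∈ (W₁ i).2.edges, c e = i)
    (hW₂ : ∀ j, ((W₂ j).2.edges.map c).Nodup) :
    OrthogonalDecompositions (closedWalkEdgeSets W₁) (closedWalkEdgeSets W₂) := by
  rintro _ ⟨i, rfl⟩ _ ⟨j, rfl⟩ e ⟨he₁, he₂⟩ e' ⟨he₁', he₂'⟩
  exact List.inj_on_of_nodup_map (hW₂ j) he₂ he₂' ((hc i e he₁).trans (hc i e' he₁').symm)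

def mapClosedWalks (σ : G ≃g G') (W : ι → (v : V) × G.Walk v v) : ι → (v : V') × G'.Walk v v :=
  fun i => ⟨σ (W i).1, (W i).2.map σ.toHom⟩

theorem mapClosedWalks_isCycle_length {W : ι → (v : V) × G.Walk v v} {l : ℕ}
    (hW : ∀ i, (W i).2.IsCycle ∧ (W i).2.length = l) (σ : G ≃g G') (i : ι) :
    (mapClosedWalks σ W i).2.IsCycle ∧ (mapClosedWalks σ W i).2.length = l :=
  ⟨(hW i).1.map σ.injective, (Walk.length_map _ _).trans (hW i).2⟩

theorem IsWalkColouring.map {W : ι → (v : V) × G.Walk v v} {c : Sym2 V → ι}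
    (hc : IsWalkColouring W c) (σ : G ≃g G') :
    IsWalkColouring (mapClosedWalks σ W) (c ∘ Sym2.map σ.symm) := by
  have hσ (e : Sym2 V) : Sym2.map σ.symm (Sym2.map σ.toHom e) = e := by
    induction e using Sym2.ind
    simp
  have hσ' (e : Sym2 V') : Sym2.map σ.toHom (Sym2.map σ.symm e) = e := by
    induction e using Sym2.ind
    simp
  simp only [IsWalkColouring, mapClosedWalks, Walk.edges_map, List.mem_map, Function.comp_apply]
  refine ⟨fun i => ?_, fun e he => ⟨_, hc.2 _ (σ.symm.toHom.map_mem_edgeSet he), hσ' e⟩⟩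
  rintro _ ⟨e, he, rfl⟩
  rw [hσ, hc.1 i e he]

end ClosedWalks

def fromRelNeIso {V α : Type*} (p : V → α) (σ : V ≃ V) (hσ : ∀ x, p (σ x) = p x) :
    fromRel (fun x y => p x ≠ p y) ≃g fromRel (fun x y => p x ≠ p y) where
  toEquiv := σ
  map_rel_iff' := by simp [hσ]

abbrev K16_16 : SimpleGraph (Fin 32) :=
  fromRel fun x y : Fin 32 => (x : ℕ) / 16 ≠ (y : ℕ) / 16

namespace K16_16

def left (a : Fin 16) : Fin 32 := Fin.castAdd 16 a

def right (b : Fin 16) : Fin 32 := Fin.natAdd 16 b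

lemma adj_left_right (a b : Fin 16) : K16_16.Adj (left a) (right b) := by
  simp only [fromRel_adj, left, right, ne_eq, Fin.ext_iff, Fin.val_castAdd, Fin.val_natAdd]
  omega

def baseCycle (a d : Fin 16) : K16_16.Walk (left a) (left a) :=
  .cons (adj_left_right a (a + d + 4)) <|
  .cons (adj_left_right (a + 4) (a + d + 4)).symm <|
  .cons (adj_left_right (a + 4) (a + d + 8)) <|
  .cons (adj_left_right (a + 8) (a + d + 8)).symm <|
  .cons (adj_left_right (a + 8) (a + d + 12)) <|
  .cons (adj_left_right (a + 12) (a + d + 12)).symm <|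
  .cons (adj_left_right (a + 12) (a + d)) <|
  .cons (adj_left_right a (a + d)).symm .nil

def offset (k : Fin 8) : Fin 16 := ⟨k % 4 + 8 * (k / 4), by omega⟩

def cycle₁ (i : Fin 4 × Fin 8) : (v : Fin 32) × K16_16.Walk v v :=
  ⟨_, baseCycle (Fin.castLE (by norm_num) i.1) (offset i.2)⟩

/-- The edge `{a, 16 + b}` gets the colour `(a mod 4, k)`, where `k` is `b - a mod 16` with its
binary digit of weight 4 deleted, i.e. the inverse of `offset`. -/
def colour (e : Sym2 (Fin 32)) : Fin 4 × Fin 8 :=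
  Sym2.lift ⟨fun x y : Fin 32 =>
    (⟨min x y % 4, by omega⟩,
      ⟨(max x y - min x y) % 4 + 4 * ((max x y - min x y) % 16 / 8), by omega⟩),
    fun x y => by simp [min_comm, max_comm]⟩ e

lemma cycle₁_isCycle_length (i : Fin 4 × Fin 8) :
    (cycle₁ i).2.IsCycle ∧ (cycle₁ i).2.length = 8 := by
  have h : ∀ i, (cycle₁ i).2.tail.support.Nodup := by decide
  have hlen : (cycle₁ i).2.length = 8 := rfl
  exact ⟨Walk.isCycle_iff_isPath_tail_and_le_length.2 ⟨(Walk.isPath_def _).2 (h i), by omega⟩, hlen⟩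

lemma isWalkColouring_cycle₁_colour : IsWalkColouring cycle₁ colour := by
  have hcol : ∀ i, (cycle₁ i).2.edges.map colour = List.replicate 8 i := by decide
  have hmem : ∀ x y, K16_16.Adj x y → s(x, y) ∈ (cycle₁ (colour s(x, y))).2.edges := by decide
  refine ⟨fun i => ?_, Sym2.ind hmem⟩
  simpa using (List.eq_replicate_iff.1 (hcol i)).2

noncomputable def relabel : K16_16 ≃g K16_16 :=
  fromRelNeIso (fun x : Fin 32 => (x : ℕ) / 16)
    (Equiv.ofBijective ![14, 4, 8, 2, 3, 15, 11, 12, 5, 1, 13, 9, 0, 10, 6, 7,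
      27, 24, 28, 22, 16, 26, 23, 31, 17, 29, 30, 20, 19, 18, 25, 21] (by decide))
    (by decide)

lemma colour_relabel_cycle₁_nodup :
    ∀ j, ((mapClosedWalks relabel cycle₁ j).2.edges.map colour).Nodup := by
  decide

end K16_16

/-- `K_{16,16}`: the complete bipartite graph on 32 vertices, the parts being the
blocks of 16 consecutive vertices (vertices adjacent iff in distinct parts). -/
theorem orthogonal_eight_cycle_decompositions_K16_16 :
    ∃ D₁ D₂ : Set (Set (Sym2 (Fin 32))),
      IsCycleDecomposition (SimpleGraph.fromRel (fun x y : Fin 32 => (x : ℕ) / 16 ≠ (y : ℕ) / 16)) 8 D₁ ∧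
      IsCycleDecomposition (SimpleGraph.fromRel (fun x y : Fin 32 => (x : ℕ) / 16 ≠ (y : ℕ) / 16)) 8 D₂ ∧
      OrthogonalDecompositions D₁ D₂ := by
  have hc := K16_16.isWalkColouring_cycle₁_colour
  exact ⟨_, _, hc.isCycleDecomposition K16_16.cycle₁_isCycle_length,
    (hc.map K16_16.relabel).isCycleDecomposition
      (mapClosedWalks_isCycle_length K16_16.cycle₁_isCycle_length K16_16.relabel),
    orthogonalDecompositions_closedWalkEdgeSets hc.1 K16_16.colour_relabel_cycle₁_nodup⟩
end

section
/- There exists a pair of orthogonal 9-cycle decompositions of the graph K_27 \ K_9 (the complete graph on 27 vertices with the edges of a complete graph on a fixed set of 9 vertices removed): two partitions of the edge set of this graph into cycles of length 9 such that any cycle of the first partition and any cycle of the second partition share at most one edge. -/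
open SimpleGraph

namespace OCD

def mkE (p : Fin 27 × Fin 27) : Sym2 (Fin 27) := s(p.1, p.2)

abbrev G27 : SimpleGraph (Fin 27) :=
  SimpleGraph.fromRel (fun x y : Fin 27 => ¬((x : ℕ) < 9 ∧ (y : ℕ) < 9))

theorem countP_unique {α : Type*} {p : α → Bool} :
    ∀ {L : List α}, L.countP p ≤ 1 → ∀ {a : α}, a ∈ L → p a = true →
      ∀ {b : α}, b ∈ L → p b = true → a = b := by
  intro L
  induction L with
  | nil => simp
  | cons x t ih =>
    intro h a ha pa b hb pb
    rw [List.countP_cons] at h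
    rcases List.mem_cons.mp ha with rfl | ha' <;>
      rcases List.mem_cons.mp hb with rfl | hb'
    · rfl
    · exfalso
      rw [pa] at h
      simp only [reduceIte] at h
      have := List.countP_pos_iff.mpr ⟨b, hb', pb⟩
      omega
    · exfalso
      rw [pb] at h
      simp only [reduceIte] at h
      have := List.countP_pos_iff.mpr ⟨a, ha', pa⟩
      omega
    · exact ih (by omega) ha' pa hb' pb

theorem mem_mkE (x y : Fin 27) (pl : List (Fin 27 × Fin 27)) :
    s(x,y) ∈ pl.map mkE ↔
      (pl.any (fun p => (x.val == p.1.val && y.val == p.2.val)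
        || (x.val == p.2.val && y.val == p.1.val)) = true) := by
  simp only [List.mem_map, List.any_eq_true, Bool.or_eq_true, Bool.and_eq_true,
    Nat.beq_eq_true_eq, Fin.val_inj, mkE, Sym2.eq_iff]
  constructor
  · rintro ⟨p, hp, hc⟩
    exact ⟨p, hp, by tauto⟩
  · rintro ⟨p, hp, hc⟩
    exact ⟨p, hp, by tauto⟩

theorem cyc9 (a b c d e f g h i : Fin 27)
    (hnd : ([a,b,c,d,e,f,g,h,i] : List (Fin 27)).Nodup) :
    IsCycleEdgeSet 9 {x | x ∈ (([(a,b),(b,c),(c,d),(d,e),(e,f),(f,g),(g,h),(h,i),(i,a)] :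
      List (Fin 27 × Fin 27)).map mkE)} := by
  simp only [List.nodup_cons, List.mem_cons, List.not_mem_nil, or_false, not_or,
    List.nodup_nil, and_true] at hnd
  obtain ⟨⟨h1,h2,h3,h4,h5,h6,h7,h8⟩,⟨h9,h10,h11,h12,h13,h14,h15⟩,
    ⟨h16,h17,h18,h19,h20,h21⟩,⟨h22,h23,h24,h25,h26⟩,⟨h27,h28,h29,h30⟩,
    ⟨h31,h32,h33⟩,⟨h34,h35⟩,h36,-⟩ := hnd
  refine ⟨⊤, a,
    .cons (top_adj a b |>.mpr h1) (.cons (top_adj b c |>.mpr h9)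
    (.cons (top_adj c d |>.mpr h16) (.cons (top_adj d e |>.mpr h22)
    (.cons (top_adj e f |>.mpr h27) (.cons (top_adj f g |>.mpr h31)
    (.cons (top_adj g h |>.mpr h34) (.cons (top_adj h i |>.mpr h36)
    (.cons (top_adj i a |>.mpr (Ne.symm h8)) .nil)))))))), ?_, rfl, ?_⟩
  · rw [SimpleGraph.Walk.isCycle_def]
    refine ⟨?_, by simp, ?_⟩
    · rw [SimpleGraph.Walk.isTrail_def]
      simp only [SimpleGraph.Walk.edges_cons, SimpleGraph.Walk.edges_nil,
        List.nodup_cons, List.mem_cons, List.not_mem_nil, or_false, not_or,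
        List.nodup_nil, and_true, Sym2.eq_iff]
      tauto
    · simp only [SimpleGraph.Walk.support_cons, SimpleGraph.Walk.support_nil,
        List.tail_cons, List.nodup_cons, List.mem_cons, List.not_mem_nil, or_false,
        not_or, List.nodup_nil, and_true]
      tauto
  · simp only [SimpleGraph.Walk.edges_cons, SimpleGraph.Walk.edges_nil, List.map, mkE]

def Ps1 : List (List (Fin 27 × Fin 27)) := [
  [(0,9), (9,18), (18,3), (3,12), (12,21), (21,6), (6,15), (15,24), (24,0)],
  [(1,10), (10,19), (19,4), (4,13), (13,22), (22,7), (7,16), (16,25), (25,1)],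
  [(2,11), (11,20), (20,5), (5,14), (14,23), (23,8), (8,17), (17,26), (26,2)],
  [(0,10), (10,20), (20,3), (3,13), (13,23), (23,6), (6,16), (16,26), (26,0)],
  [(1,11), (11,21), (21,4), (4,14), (14,24), (24,7), (7,17), (17,18), (18,1)],
  [(2,12), (12,22), (22,5), (5,15), (15,25), (25,8), (8,9), (9,19), (19,2)],
  [(0,11), (11,22), (22,3), (3,14), (14,25), (25,6), (6,17), (17,19), (19,0)],
  [(1,12), (12,23), (23,4), (4,15), (15,26), (26,7), (7,9), (9,20), (20,1)],
  [(2,13), (13,24), (24,5), (5,16), (16,18), (18,8), (8,10), (10,21), (21,2)],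
  [(0,12), (12,24), (24,3), (3,15), (15,18), (18,6), (6,9), (9,21), (21,0)],
  [(1,13), (13,25), (25,4), (4,16), (16,19), (19,7), (7,10), (10,22), (22,1)],
  [(2,14), (14,26), (26,5), (5,17), (17,20), (20,8), (8,11), (11,23), (23,2)],
  [(0,13), (13,26), (26,3), (3,16), (16,20), (20,6), (6,10), (10,23), (23,0)],
  [(1,14), (14,18), (18,4), (4,17), (17,21), (21,7), (7,11), (11,24), (24,1)],
  [(2,15), (15,19), (19,5), (5,9), (9,22), (22,8), (8,12), (12,25), (25,2)],
  [(0,14), (14,19), (19,3), (3,17), (17,22), (22,6), (6,11), (11,25), (25,0)],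
  [(1,15), (15,20), (20,4), (4,9), (9,23), (23,7), (7,12), (12,26), (26,1)],
  [(2,16), (16,21), (21,5), (5,10), (10,24), (24,8), (8,13), (13,18), (18,2)],
  [(0,15), (15,21), (21,3), (3,9), (9,24), (24,6), (6,12), (12,18), (18,0)],
  [(1,16), (16,22), (22,4), (4,10), (10,25), (25,7), (7,13), (13,19), (19,1)],
  [(2,17), (17,23), (23,5), (5,11), (11,26), (26,8), (8,14), (14,20), (20,2)],
  [(0,16), (16,23), (23,3), (3,10), (10,26), (26,6), (6,13), (13,20), (20,0)],
  [(1,17), (17,24), (24,4), (4,11), (11,18), (18,7), (7,14), (14,21), (21,1)],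
  [(2,9), (9,25), (25,5), (5,12), (12,19), (19,8), (8,15), (15,22), (22,2)],
  [(0,17), (17,25), (25,3), (3,11), (11,19), (19,6), (6,14), (14,22), (22,0)],
  [(1,9), (9,26), (26,4), (4,12), (12,20), (20,7), (7,15), (15,23), (23,1)],
  [(2,10), (10,18), (18,5), (5,13), (13,21), (21,8), (8,16), (16,24), (24,2)],
  [(17,9), (9,10), (10,16), (16,11), (11,15), (15,12), (12,14), (14,13), (13,17)],
  [(17,10), (10,11), (11,9), (9,12), (12,16), (16,13), (13,15), (15,14), (14,17)],
  [(17,11), (11,12), (12,10), (10,13), (13,9), (9,14), (14,16), (16,15), (15,17)],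
  [(17,12), (12,13), (13,11), (11,14), (14,10), (10,15), (15,9), (9,16), (16,17)],
  [(26,18), (18,19), (19,25), (25,20), (20,24), (24,21), (21,23), (23,22), (22,26)],
  [(26,19), (19,20), (20,18), (18,21), (21,25), (25,22), (22,24), (24,23), (23,26)],
  [(26,20), (20,21), (21,19), (19,22), (22,18), (18,23), (23,25), (25,24), (24,26)],
  [(26,21), (21,22), (22,20), (20,23), (23,19), (19,24), (24,18), (18,25), (25,26)]]

def Ps2 : List (List (Fin 27 × Fin 27)) := [
  [(23,5), (5,13), (13,22), (22,25), (25,18), (18,19), (19,12), (12,3), (3,23)],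
  [(5,16), (16,19), (19,4), (4,11), (11,13), (13,0), (0,26), (26,21), (21,5)],
  [(20,26), (26,14), (14,8), (8,9), (9,7), (7,13), (13,10), (10,11), (11,20)],
  [(12,5), (5,19), (19,20), (20,6), (6,13), (13,23), (23,21), (21,9), (9,12)],
  [(22,10), (10,18), (18,14), (14,5), (5,15), (15,26), (26,4), (4,9), (9,22)],
  [(18,0), (0,25), (25,21), (21,19), (19,6), (6,16), (16,1), (1,11), (11,18)],
  [(15,0), (0,23), (23,8), (8,25), (25,2), (2,18), (18,1), (1,12), (12,15)],
  [(15,7), (7,21), (21,18), (18,24), (24,9), (9,14), (14,25), (25,1), (1,15)],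
  [(2,26), (26,6), (6,11), (11,7), (7,12), (12,20), (20,21), (21,13), (13,2)],
  [(22,1), (1,21), (21,11), (11,0), (0,10), (10,15), (15,24), (24,20), (20,22)],
  [(20,16), (16,24), (24,4), (4,17), (17,23), (23,18), (18,13), (13,15), (15,20)],
  [(5,11), (11,15), (15,23), (23,16), (16,12), (12,8), (8,13), (13,25), (25,5)],
  [(0,21), (21,17), (17,19), (19,22), (22,14), (14,7), (7,10), (10,24), (24,0)],
  [(24,7), (7,26), (26,16), (16,10), (10,8), (8,21), (21,22), (22,23), (23,24)],
  [(10,6), (6,25), (25,26), (26,19), (19,14), (14,4), (4,23), (23,9), (9,10)],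
  [(22,15), (15,25), (25,12), (12,14), (14,1), (1,19), (19,23), (23,11), (11,22)],
  [(19,3), (3,13), (13,12), (12,22), (22,4), (4,25), (25,24), (24,8), (8,19)],
  [(4,15), (15,8), (8,11), (11,17), (17,26), (26,9), (9,16), (16,21), (21,4)],
  [(15,19), (19,25), (25,23), (23,20), (20,9), (9,2), (2,12), (12,18), (18,15)],
  [(0,19), (19,9), (9,3), (3,26), (26,5), (5,20), (20,25), (25,16), (16,0)],
  [(14,21), (21,10), (10,5), (5,9), (9,6), (6,23), (23,7), (7,16), (16,14)],
  [(9,15), (15,16), (16,3), (3,10), (10,19), (19,7), (7,20), (20,17), (17,9)],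
  [(19,11), (11,12), (12,0), (0,20), (20,1), (1,17), (17,16), (16,13), (13,19)],
  [(9,25), (25,7), (7,18), (18,22), (22,6), (6,12), (12,17), (17,0), (0,9)],
  [(25,3), (3,15), (15,6), (6,24), (24,19), (19,2), (2,14), (14,11), (11,25)],
  [(1,24), (24,21), (21,3), (3,18), (18,17), (17,15), (15,14), (14,23), (23,1)],
  [(11,2), (2,17), (17,24), (24,3), (3,22), (22,8), (8,18), (18,9), (9,11)],
  [(24,14), (14,17), (17,6), (6,18), (18,16), (16,8), (8,26), (26,22), (22,24)],
  [(13,9), (9,1), (1,26), (26,10), (10,17), (17,5), (5,18), (18,4), (4,13)],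
  [(17,22), (22,2), (2,21), (21,6), (6,14), (14,10), (10,20), (20,13), (13,17)],
  [(26,23), (23,2), (2,15), (15,21), (21,12), (12,10), (10,1), (1,13), (13,26)],
  [(22,5), (5,24), (24,2), (2,16), (16,4), (4,20), (20,14), (14,0), (0,22)],
  [(4,12), (12,26), (26,24), (24,11), (11,3), (3,20), (20,2), (2,10), (10,4)],
  [(20,18), (18,26), (26,11), (11,16), (16,22), (22,7), (7,17), (17,8), (8,20)],
  [(3,17), (17,25), (25,10), (10,23), (23,12), (12,24), (24,13), (13,14), (14,3)]]

def LL (Ps : List (List (Fin 27 × Fin 27))) : List (List (Sym2 (Fin 27))) :=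
  Ps.map (List.map mkE)

def DD (Ps : List (List (Fin 27 × Fin 27))) : Set (Set (Sym2 (Fin 27))) :=
  {C | ∃ l ∈ LL Ps, C = {e | e ∈ l}}

set_option maxHeartbeats 2000000 in
theorem core1 : ∀ x y : Fin 27, (x:ℕ) < (y:ℕ) → 9 ≤ (y:ℕ) →
    Ps1.countP (fun pl => pl.any (fun p =>
      (x.val == p.1.val && y.val == p.2.val) || (x.val == p.2.val && y.val == p.1.val))) = 1 := by
  decide

set_option maxHeartbeats 2000000 in
theorem core2 : ∀ x y : Fin 27, (x:ℕ) < (y:ℕ) → 9 ≤ (y:ℕ) →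
    Ps2.countP (fun pl => pl.any (fun p =>
      (x.val == p.1.val && y.val == p.2.val) || (x.val == p.2.val && y.val == p.1.val))) = 1 := by
  decide

set_option maxHeartbeats 2000000 in
theorem orthCore : ∀ pl1 ∈ Ps1, ∀ pl2 ∈ Ps2,
    pl1.countP (fun p => pl2.any (fun q =>
      (p.1.val == q.1.val && p.2.val == q.2.val)
        || (p.1.val == q.2.val && p.2.val == q.1.val))) ≤ 1 := by
  decide

theorem subOf {Ps : List (List (Fin 27 × Fin 27))}
    (h : (Ps.all (fun pl => pl.all (fun p =>
      (!(p.1.val == p.2.val)) && (!(Nat.blt p.1.val 9 && Nat.blt p.2.val 9))))) = true) :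
    ∀ pl ∈ Ps, ∀ p ∈ pl, p.1 ≠ p.2 ∧ ¬((p.1 : ℕ) < 9 ∧ (p.2 : ℕ) < 9) := by
  intro pl hpl p hp
  have h2 := List.all_eq_true.mp (List.all_eq_true.mp h pl hpl) p hp
  obtain ⟨ha, hb⟩ := (Bool.and_eq_true _ _).mp h2
  simp only [Bool.not_eq_true', beq_eq_false_iff_ne, ne_eq] at ha
  refine ⟨fun he => ha (congrArg Fin.val he), fun hc => ?_⟩
  have hT : (Nat.blt p.1.val 9 && Nat.blt p.2.val 9) = true := by
    rw [Bool.and_eq_true, Nat.blt_eq, Nat.blt_eq]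
    exact ⟨hc.1, hc.2⟩
  rw [hT] at hb
  simp at hb

set_option maxHeartbeats 2000000 in
theorem subCore1 : (Ps1.all (fun pl => pl.all (fun p =>
    (!(p.1.val == p.2.val)) && (!(Nat.blt p.1.val 9 && Nat.blt p.2.val 9))))) = true := by decide

set_option maxHeartbeats 2000000 in
theorem subCore2 : (Ps2.all (fun pl => pl.all (fun p =>
    (!(p.1.val == p.2.val)) && (!(Nat.blt p.1.val 9 && Nat.blt p.2.val 9))))) = true := by decide

theorem countP_LL (Ps : List (List (Fin 27 × Fin 27))) (x y : Fin 27) :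
    (LL Ps).countP (fun l => decide (s(x,y) ∈ l)) =
      Ps.countP (fun pl => pl.any (fun p =>
        (x.val == p.1.val && y.val == p.2.val) || (x.val == p.2.val && y.val == p.1.val))) := by
  rw [LL, List.countP_map]
  refine List.countP_congr (fun pl _ => ?_)
  simp only [Function.comp_apply]
  rw [show (decide (s(x,y) ∈ pl.map mkE)) =
    decide ((pl.any (fun p => (x.val == p.1.val && y.val == p.2.val)
      || (x.val == p.2.val && y.val == p.1.val))) = true) from
    decide_eq_decide.mpr (mem_mkE x y pl)]
  simp

theorem countP_one {Ps : List (List (Fin 27 × Fin 27))}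
    (hcore : ∀ x y : Fin 27, (x:ℕ) < (y:ℕ) → 9 ≤ (y:ℕ) →
      Ps.countP (fun pl => pl.any (fun p =>
        (x.val == p.1.val && y.val == p.2.val) || (x.val == p.2.val && y.val == p.1.val))) = 1)
    {x y : Fin 27} (hxy : x ≠ y) (h9 : ¬((x:ℕ) < 9 ∧ (y:ℕ) < 9)) :
    (LL Ps).countP (fun l => decide (s(x,y) ∈ l)) = 1 := by
  rcases hxy.lt_or_gt with h | h
  · have hv : (x:ℕ) < (y:ℕ) := h
    rw [countP_LL]
    exact hcore x y hv (by omega)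
  · have hv : (y:ℕ) < (x:ℕ) := h
    rw [Sym2.eq_swap, countP_LL]
    exact hcore y x hv (by omega)

theorem adj_iff (x y : Fin 27) : G27.Adj x y ↔ x ≠ y ∧ ¬((x:ℕ) < 9 ∧ (y:ℕ) < 9) := by
  rw [SimpleGraph.fromRel_adj]
  constructor
  · rintro ⟨hne, h | h⟩
    · exact ⟨hne, h⟩
    · exact ⟨hne, fun hc => h ⟨hc.2, hc.1⟩⟩
  · rintro ⟨hne, h⟩
    exact ⟨hne, Or.inl h⟩

theorem decomp (Ps : List (List (Fin 27 × Fin 27)))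
    (hcyc : ∀ l ∈ LL Ps, IsCycleEdgeSet 9 {e | e ∈ l})
    (hsub : ∀ pl ∈ Ps, ∀ p ∈ pl, p.1 ≠ p.2 ∧ ¬((p.1 : ℕ) < 9 ∧ (p.2 : ℕ) < 9))
    (hcore : ∀ x y : Fin 27, (x:ℕ) < (y:ℕ) → 9 ≤ (y:ℕ) →
      Ps.countP (fun pl => pl.any (fun p =>
        (x.val == p.1.val && y.val == p.2.val) || (x.val == p.2.val && y.val == p.1.val))) = 1) :
    IsCycleDecomposition G27 9 (DD Ps) := by
  constructor
  · rintro C ⟨l, hl, rfl⟩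
    refine ⟨hcyc l hl, ?_⟩
    obtain ⟨pl, hpl, rfl⟩ := List.mem_map.mp hl
    rintro e he
    obtain ⟨p, hp, rfl⟩ := List.mem_map.mp he
    rw [mkE, SimpleGraph.mem_edgeSet, adj_iff]
    exact hsub pl hpl p hp
  · intro e he
    induction e using Sym2.ind with
    | _ x y =>
      rw [SimpleGraph.mem_edgeSet, adj_iff] at he
      have hcnt := countP_one hcore he.1 he.2
      have hpos : 0 < (LL Ps).countP (fun l => decide (s(x,y) ∈ l)) := by omega
      obtain ⟨l, hl, hel⟩ := List.countP_pos_iff.mp hpos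
      refine ⟨{e | e ∈ l}, ⟨⟨l, hl, rfl⟩, of_decide_eq_true hel⟩, ?_⟩
      rintro C ⟨⟨l', hl', rfl⟩, hel'⟩
      have : l' = l :=
        countP_unique (le_of_eq hcnt) hl' (decide_eq_true hel') hl hel
      rw [this]

theorem orth : OrthogonalDecompositions (DD Ps1) (DD Ps2) := by
  rintro C₁ ⟨l1, hl1, rfl⟩ C₂ ⟨l2, hl2, rfl⟩
  obtain ⟨pl1, hpl1, rfl⟩ := List.mem_map.mp hl1
  obtain ⟨pl2, hpl2, rfl⟩ := List.mem_map.mp hl2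
  have hc : pl1.countP (fun p => decide (mkE p ∈ pl2.map mkE)) ≤ 1 := by
    have := orthCore pl1 hpl1 pl2 hpl2
    rw [List.countP_congr (fun p _ => ?_)]
    · exact this
    · rw [show (decide (mkE p ∈ pl2.map mkE)) =
        decide ((pl2.any (fun q => (p.1.val == q.1.val && p.2.val == q.2.val)
          || (p.1.val == q.2.val && p.2.val == q.1.val))) = true) from
        decide_eq_decide.mpr (mem_mkE p.1 p.2 pl2)]
      simp
  rintro u ⟨hu1, hu2⟩ v ⟨hv1, hv2⟩
  obtain ⟨p, hp, rfl⟩ := List.mem_map.mp hu1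
  obtain ⟨q, hq, rfl⟩ := List.mem_map.mp hv1
  have : p = q :=
    countP_unique hc hp (decide_eq_true hu2) hq (decide_eq_true hv2)
  rw [this]

set_option maxRecDepth 4000 in
theorem hcyc1 : ∀ l ∈ LL Ps1, IsCycleEdgeSet 9 {e | e ∈ l} := by
  intro l hl
  obtain ⟨pl, hpl, rfl⟩ := List.mem_map.mp hl
  simp only [Ps1, List.mem_cons, List.not_mem_nil, or_false] at hpl
  rcases hpl with rfl|rfl|rfl|rfl|rfl|rfl|rfl|rfl|rfl|rfl|rfl|rfl|rfl|rfl|rfl|rfl|rfl|rfl|rfl|rfl|rfl|rfl|rfl|rfl|rfl|rfl|rfl|rfl|rfl|rfl|rfl|rfl|rfl|rfl|rfl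
  · exact cyc9 0 9 18 3 12 21 6 15 24 (by decide)
  · exact cyc9 1 10 19 4 13 22 7 16 25 (by decide)
  · exact cyc9 2 11 20 5 14 23 8 17 26 (by decide)
  · exact cyc9 0 10 20 3 13 23 6 16 26 (by decide)
  · exact cyc9 1 11 21 4 14 24 7 17 18 (by decide)
  · exact cyc9 2 12 22 5 15 25 8 9 19 (by decide)
  · exact cyc9 0 11 22 3 14 25 6 17 19 (by decide)
  · exact cyc9 1 12 23 4 15 26 7 9 20 (by decide)
  · exact cyc9 2 13 24 5 16 18 8 10 21 (by decide)
  · exact cyc9 0 12 24 3 15 18 6 9 21 (by decide)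
  · exact cyc9 1 13 25 4 16 19 7 10 22 (by decide)
  · exact cyc9 2 14 26 5 17 20 8 11 23 (by decide)
  · exact cyc9 0 13 26 3 16 20 6 10 23 (by decide)
  · exact cyc9 1 14 18 4 17 21 7 11 24 (by decide)
  · exact cyc9 2 15 19 5 9 22 8 12 25 (by decide)
  · exact cyc9 0 14 19 3 17 22 6 11 25 (by decide)
  · exact cyc9 1 15 20 4 9 23 7 12 26 (by decide)
  · exact cyc9 2 16 21 5 10 24 8 13 18 (by decide)
  · exact cyc9 0 15 21 3 9 24 6 12 18 (by decide)
  · exact cyc9 1 16 22 4 10 25 7 13 19 (by decide)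
  · exact cyc9 2 17 23 5 11 26 8 14 20 (by decide)
  · exact cyc9 0 16 23 3 10 26 6 13 20 (by decide)
  · exact cyc9 1 17 24 4 11 18 7 14 21 (by decide)
  · exact cyc9 2 9 25 5 12 19 8 15 22 (by decide)
  · exact cyc9 0 17 25 3 11 19 6 14 22 (by decide)
  · exact cyc9 1 9 26 4 12 20 7 15 23 (by decide)
  · exact cyc9 2 10 18 5 13 21 8 16 24 (by decide)
  · exact cyc9 17 9 10 16 11 15 12 14 13 (by decide)
  · exact cyc9 17 10 11 9 12 16 13 15 14 (by decide)
  · exact cyc9 17 11 12 10 13 9 14 16 15 (by decide)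
  · exact cyc9 17 12 13 11 14 10 15 9 16 (by decide)
  · exact cyc9 26 18 19 25 20 24 21 23 22 (by decide)
  · exact cyc9 26 19 20 18 21 25 22 24 23 (by decide)
  · exact cyc9 26 20 21 19 22 18 23 25 24 (by decide)
  · exact cyc9 26 21 22 20 23 19 24 18 25 (by decide)

set_option maxRecDepth 4000 in
theorem hcyc2 : ∀ l ∈ LL Ps2, IsCycleEdgeSet 9 {e | e ∈ l} := by
  intro l hl
  obtain ⟨pl, hpl, rfl⟩ := List.mem_map.mp hl
  simp only [Ps2, List.mem_cons, List.not_mem_nil, or_false] at hpl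
  rcases hpl with rfl|rfl|rfl|rfl|rfl|rfl|rfl|rfl|rfl|rfl|rfl|rfl|rfl|rfl|rfl|rfl|rfl|rfl|rfl|rfl|rfl|rfl|rfl|rfl|rfl|rfl|rfl|rfl|rfl|rfl|rfl|rfl|rfl|rfl|rfl
  · exact cyc9 23 5 13 22 25 18 19 12 3 (by decide)
  · exact cyc9 5 16 19 4 11 13 0 26 21 (by decide)
  · exact cyc9 20 26 14 8 9 7 13 10 11 (by decide)
  · exact cyc9 12 5 19 20 6 13 23 21 9 (by decide)
  · exact cyc9 22 10 18 14 5 15 26 4 9 (by decide)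
  · exact cyc9 18 0 25 21 19 6 16 1 11 (by decide)
  · exact cyc9 15 0 23 8 25 2 18 1 12 (by decide)
  · exact cyc9 15 7 21 18 24 9 14 25 1 (by decide)
  · exact cyc9 2 26 6 11 7 12 20 21 13 (by decide)
  · exact cyc9 22 1 21 11 0 10 15 24 20 (by decide)
  · exact cyc9 20 16 24 4 17 23 18 13 15 (by decide)
  · exact cyc9 5 11 15 23 16 12 8 13 25 (by decide)
  · exact cyc9 0 21 17 19 22 14 7 10 24 (by decide)
  · exact cyc9 24 7 26 16 10 8 21 22 23 (by decide)
  · exact cyc9 10 6 25 26 19 14 4 23 9 (by decide)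
  · exact cyc9 22 15 25 12 14 1 19 23 11 (by decide)
  · exact cyc9 19 3 13 12 22 4 25 24 8 (by decide)
  · exact cyc9 4 15 8 11 17 26 9 16 21 (by decide)
  · exact cyc9 15 19 25 23 20 9 2 12 18 (by decide)
  · exact cyc9 0 19 9 3 26 5 20 25 16 (by decide)
  · exact cyc9 14 21 10 5 9 6 23 7 16 (by decide)
  · exact cyc9 9 15 16 3 10 19 7 20 17 (by decide)
  · exact cyc9 19 11 12 0 20 1 17 16 13 (by decide)
  · exact cyc9 9 25 7 18 22 6 12 17 0 (by decide)
  · exact cyc9 25 3 15 6 24 19 2 14 11 (by decide)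
  · exact cyc9 1 24 21 3 18 17 15 14 23 (by decide)
  · exact cyc9 11 2 17 24 3 22 8 18 9 (by decide)
  · exact cyc9 24 14 17 6 18 16 8 26 22 (by decide)
  · exact cyc9 13 9 1 26 10 17 5 18 4 (by decide)
  · exact cyc9 17 22 2 21 6 14 10 20 13 (by decide)
  · exact cyc9 26 23 2 15 21 12 10 1 13 (by decide)
  · exact cyc9 22 5 24 2 16 4 20 14 0 (by decide)
  · exact cyc9 4 12 26 24 11 3 20 2 10 (by decide)
  · exact cyc9 20 18 26 11 16 22 7 17 8 (by decide)
  · exact cyc9 3 17 25 10 23 12 24 13 14 (by decide)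

end OCD

/-- `K_27` minus `K_9`: the complete graph on 27 vertices with all edges among the
fixed 9-element vertex set `{0,...,8}` removed. -/
theorem orthogonal_nine_cycle_decompositions_K27_minus_K9 :
    ∃ D₁ D₂ : Set (Set (Sym2 (Fin 27))),
      IsCycleDecomposition (SimpleGraph.fromRel (fun x y : Fin 27 => ¬((x : ℕ) < 9 ∧ (y : ℕ) < 9))) 9 D₁ ∧
      IsCycleDecomposition (SimpleGraph.fromRel (fun x y : Fin 27 => ¬((x : ℕ) < 9 ∧ (y : ℕ) < 9))) 9 D₂ ∧
      OrthogonalDecompositions D₁ D₂ :=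
  ⟨OCD.DD OCD.Ps1, OCD.DD OCD.Ps2,
    OCD.decomp OCD.Ps1 OCD.hcyc1 (OCD.subOf OCD.subCore1) OCD.core1,
    OCD.decomp OCD.Ps2 OCD.hcyc2 (OCD.subOf OCD.subCore2) OCD.core2,
    OCD.orth⟩
end
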